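/- arXiv:2405.02221 — 2 statements merged into one kernel-verified Lean document; each statement's English description precedes it below -/
import Mathlib

section
/- For s > d/2 and any k ∈ [[N]]^d, the tail sum ∑_{ℓ ∈ Z^d∖{0}} (1 + |k + ℓN|^{2s})^{−1} is bounded by c_{d,s} N^{−2s}, where c_{d,s} = (4d)^s ∑_{ℓ ∈ Z^d∖{0}} |ℓ|^{−2s} < ∞. -/
/-!
For `k ∈ [[N]]^d` every coordinate satisfies `2|kᵢ| ≤ N`, hence `2|kᵢ + ℓᵢN| ≥ |ℓᵢ|N`, and the
`ℓ`-th term is at most `(4/N²)^s |ℓ|^{-2s}`. The series `∑_{ℓ ≠ 0} |ℓ|^{-2s}` converges because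
`|ℓ| ≥ max(1, |ℓᵢ|)` for every `i`, so `|ℓ|^{-2s} ≤ ∏ᵢ max(1, |ℓᵢ|)^{-2s/d}`: a product of
one-dimensional `p`-series with `p = 2s/d > 1`.
-/

open scoped BigOperators
open MeasureTheory Finset Filter

noncomputable section

/-- The symmetric frequency index set `[[N]]`, with `N` elements. -/
def symmSet (N : ℕ) : Finset ℤ := Finset.Icc (-((N / 2 : ℕ) : ℤ)) (((N - 1) / 2 : ℕ) : ℤ)

/-- The symmetric frequency index set `[[N]]^d`. -/
def symmPi (d N : ℕ) : Finset (Fin d → ℤ) := Fintype.piFinset fun _ => symmSet N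

/-- Grid point `x_n = n / N` on the torus, for `n ∈ [N]^d`. -/
def gridPt (d N : ℕ) (n : Fin d → Fin N) : Fin d → ℝ := fun i => (n i : ℝ) / (N : ℝ)

/-- The unit cube `[0,1]^d`, a fundamental domain for the torus `T^d`. -/
def cube (d : ℕ) : Set (Fin d → ℝ) := Set.univ.pi fun _ => Set.Icc (0 : ℝ) 1

/-- The complex exponential `e^{2 π i ⟨k, x⟩}`. -/
def fexp (d : ℕ) (k : Fin d → ℤ) (x : Fin d → ℝ) : ℂ :=
  Complex.exp (2 * (Real.pi : ℂ) * Complex.I * ∑ i, (k i : ℂ) * (x i : ℂ))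

/-- Discrete Fourier transform of grid values: `DFT(v)(k) = N^{-d} ∑_n v(x_n) e^{-2πi⟨k,x_n⟩}`. -/
def dft (d N : ℕ) (v : (Fin d → Fin N) → ℂ) (k : Fin d → ℤ) : ℂ :=
  ((N : ℂ) ^ d)⁻¹ * ∑ n : Fin d → Fin N, v n * fexp d (-k) (gridPt d N n)

/-- Continuous Fourier coefficient `v̂(k) = ∫_{T^d} v(x) e^{-2πi⟨k,x⟩} dx`. -/
def fcoef (d : ℕ) (f : (Fin d → ℝ) → ℂ) (k : Fin d → ℤ) : ℂ :=
  ∫ x in cube d, f x * fexp d (-k) x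

/-- Squared Euclidean norm `|k|²` of an integer vector. -/
def sqnormZ (d : ℕ) (k : Fin d → ℤ) : ℝ := ∑ i, ((k i : ℝ)) ^ 2

theorem summable_max_one_abs_intCast_rpow_neg {p : ℝ} (hp : 1 < p) :
    Summable fun m : ℤ => max 1 |(m : ℝ)| ^ (-p) := by
  refine (Real.summable_abs_int_rpow hp).congr_cofinite ?_
  filter_upwards [eventually_cofinite_ne 0] with m hm
  rw [max_eq_right (by exact_mod_cast Int.one_le_abs hm)]

theorem summable_prod_apply_of_nonneg {α : Type*} {f : α → ℝ} (hf₀ : 0 ≤ f) (hf : Summable f) :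
    ∀ d : ℕ, Summable fun x : Fin d → α => ∏ i, f (x i)
  | 0 => .of_finite
  | d + 1 => by
    have hprod := hf.mul_of_nonneg (summable_prod_apply_of_nonneg hf₀ hf d) hf₀
      fun x => prod_nonneg fun i _ => hf₀ (x i)
    refine ((Fin.consEquiv fun _ => α).symm.summable_iff.mpr hprod).congr fun x => ?_
    simp [Fin.prod_univ_succ, Fin.tail]

section sqnormZ

variable {d : ℕ}

theorem sqnormZ_nonneg (ℓ : Fin d → ℤ) : 0 ≤ sqnormZ d ℓ :=
  sum_nonneg fun i _ => sq_nonneg (ℓ i : ℝ)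

theorem sq_le_sqnormZ (ℓ : Fin d → ℤ) (i : Fin d) : (ℓ i : ℝ) ^ 2 ≤ sqnormZ d ℓ :=
  single_le_sum (fun j _ => sq_nonneg (ℓ j : ℝ)) (mem_univ i)

theorem one_le_sqnormZ {ℓ : Fin d → ℤ} (hℓ : ℓ ≠ 0) : 1 ≤ sqnormZ d ℓ := by
  obtain ⟨i, hi⟩ := Function.ne_iff.mp hℓ
  have : (1 : ℝ) ≤ |(ℓ i : ℝ)| := by exact_mod_cast Int.one_le_abs hi
  nlinarith [sq_le_sqnormZ ℓ i, sq_abs (ℓ i : ℝ)]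

theorem prod_max_one_abs_le_sqnormZ_rpow {ℓ : Fin d → ℤ} (hℓ : ℓ ≠ 0) :
    ∏ i, max 1 |(ℓ i : ℝ)| ≤ sqnormZ d ℓ ^ ((d : ℝ) / 2) := by
  have hfactor (i : Fin d) : max 1 |(ℓ i : ℝ)| ≤ √(sqnormZ d ℓ) :=
    max_le (Real.one_le_sqrt.mpr (one_le_sqnormZ hℓ)) (Real.abs_le_sqrt (sq_le_sqnormZ ℓ i))
  calc ∏ i, max 1 |(ℓ i : ℝ)| ≤ ∏ _i : Fin d, √(sqnormZ d ℓ) :=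
        prod_le_prod (fun i _ => zero_le_one.trans (le_max_left _ _)) fun i _ => hfactor i
    _ = sqnormZ d ℓ ^ ((d : ℝ) / 2) := by
        rw [prod_const, card_univ, Fintype.card_fin, Real.sqrt_eq_rpow, ← Real.rpow_mul_natCast
          (sqnormZ_nonneg ℓ)]
        ring_nf

theorem inv_sqnormZ_rpow_le_prod (hd : 0 < d) {s : ℝ} (hs : 0 < s) {ℓ : Fin d → ℤ} (hℓ : ℓ ≠ 0) :
    (sqnormZ d ℓ ^ s)⁻¹ ≤ ∏ i, max 1 |(ℓ i : ℝ)| ^ (-(2 * s / d)) := by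
  have hfactor_pos (i : Fin d) : 0 < max 1 |(ℓ i : ℝ)| := zero_lt_one.trans_le (le_max_left _ _)
  calc (sqnormZ d ℓ ^ s)⁻¹ = (sqnormZ d ℓ ^ ((d : ℝ) / 2)) ^ (-(2 * s / d)) := by
        rw [← Real.rpow_mul (sqnormZ_nonneg ℓ), ← Real.rpow_neg (sqnormZ_nonneg ℓ)]
        field_simp
    _ ≤ (∏ i, max 1 |(ℓ i : ℝ)|) ^ (-(2 * s / d)) :=
        Real.rpow_le_rpow_of_nonpos (prod_pos fun i _ => hfactor_pos i)
          (prod_max_one_abs_le_sqnormZ_rpow hℓ) (by simp only [neg_nonpos]; positivity)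
    _ = ∏ i, max 1 |(ℓ i : ℝ)| ^ (-(2 * s / d)) :=
        (Real.finsetProd_rpow _ _ (fun i _ => (hfactor_pos i).le) _).symm

theorem summable_inv_sqnormZ_rpow (hd : 0 < d) {s : ℝ} (hs : (d : ℝ) / 2 < s) :
    Summable fun ℓ : {ℓ : Fin d → ℤ // ℓ ≠ 0} => (sqnormZ d ℓ.1 ^ s)⁻¹ := by
  have hs₀ : 0 < s := lt_of_le_of_lt (by positivity) hs
  have hp : 1 < 2 * s / d := by
    rw [lt_div_iff₀ (by exact_mod_cast hd)]
    linarith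
  have hprod := summable_prod_apply_of_nonneg (fun m => by positivity)
    (summable_max_one_abs_intCast_rpow_neg hp) d
  exact (hprod.subtype _).of_nonneg_of_le (fun ℓ => by positivity [sqnormZ_nonneg ℓ.1])
    fun ℓ => inv_sqnormZ_rpow_le_prod hd hs₀ ℓ.2

end sqnormZ

theorem two_mul_abs_le_of_mem_symmSet {N : ℕ} {j : ℤ} (hj : j ∈ symmSet N) :
    2 * |(j : ℝ)| ≤ N := by
  rw [symmSet, mem_Icc] at hj
  have : 2 * |j| ≤ N := by rw [abs_eq_max_neg]; omega
  exact_mod_cast this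

theorem abs_mul_le_two_mul_abs_add {a c : ℝ} (ha : 2 * |a| ≤ c) (m : ℤ) :
    |(m : ℝ)| * c ≤ 2 * |a + m * c| := by
  rcases eq_or_ne m 0 with rfl | hm
  · simp
  have hm : (1 : ℝ) ≤ |(m : ℝ)| := by exact_mod_cast Int.one_le_abs hm
  have hc : 0 ≤ c := (mul_nonneg zero_le_two (abs_nonneg a)).trans ha
  have := abs_sub_abs_le_abs_sub (m * c) (-a)
  rw [abs_neg, sub_neg_eq_add, add_comm, abs_mul, abs_of_nonneg hc] at this
  nlinarith

theorem sq_mul_sqnormZ_le_of_mem_symmPi {d N : ℕ} {k : Fin d → ℤ} (hk : k ∈ symmPi d N)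
    (ℓ : Fin d → ℤ) : (N : ℝ) ^ 2 * sqnormZ d ℓ ≤ 4 * sqnormZ d (k + fun i => ℓ i * (N : ℤ)) := by
  simp only [sqnormZ, mul_sum]
  refine sum_le_sum fun i _ => ?_
  have hki := two_mul_abs_le_of_mem_symmSet (Fintype.mem_piFinset.mp hk i)
  have hsq := pow_le_pow_left₀ (by positivity) (abs_mul_le_two_mul_abs_add hki (ℓ i)) 2
  rw [mul_pow, mul_pow, sq_abs, sq_abs] at hsq
  push_cast [Pi.add_apply]
  linarith

theorem inv_one_add_rpow_le {A B c s : ℝ} (hc : 0 < c) (hB : 0 < B) (hs : 0 ≤ s)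
    (h : c * B ≤ A) : (1 + A ^ s)⁻¹ ≤ (c ^ s)⁻¹ * (B ^ s)⁻¹ := by
  rw [← mul_inv, ← Real.mul_rpow hc.le hB.le]
  exact inv_anti₀ (by positivity)
    ((Real.rpow_le_rpow (by positivity) h hs).trans (le_add_of_nonneg_left zero_le_one))

theorem inv_one_add_sqnormZ_shift_rpow_le {d N : ℕ} (hd : 0 < d) (hN : 0 < N) {s : ℝ}
    (hs : 0 ≤ s) {k : Fin d → ℤ} (hk : k ∈ symmPi d N) {ℓ : Fin d → ℤ} (hℓ : ℓ ≠ 0) :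
    (1 + sqnormZ d (k + fun i => ℓ i * (N : ℤ)) ^ s)⁻¹
      ≤ (4 * (d : ℝ)) ^ s * (N : ℝ) ^ (-(2 * s)) * (sqnormZ d ℓ ^ s)⁻¹ := by
  have hN' : (0 : ℝ) < N := by exact_mod_cast hN
  have hscale : (N : ℝ) ^ 2 / 4 * sqnormZ d ℓ ≤ sqnormZ d (k + fun i => ℓ i * (N : ℤ)) := by
    linarith [sq_mul_sqnormZ_le_of_mem_symmPi hk ℓ]
  have hconst : (((N : ℝ) ^ 2 / 4) ^ s)⁻¹ = 4 ^ s * (N : ℝ) ^ (-(2 * s)) := by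
    rw [Real.div_rpow (by positivity) (by norm_num), ← Real.rpow_natCast_mul hN'.le, inv_div,
      Real.rpow_neg hN'.le, Nat.cast_ofNat, div_eq_mul_inv]
  have hd_one : (1 : ℝ) ≤ d := by exact_mod_cast hd
  calc (1 + sqnormZ d (k + fun i => ℓ i * (N : ℤ)) ^ s)⁻¹
      ≤ (((N : ℝ) ^ 2 / 4) ^ s)⁻¹ * (sqnormZ d ℓ ^ s)⁻¹ :=
        inv_one_add_rpow_le (by positivity) (zero_lt_one.trans_le (one_le_sqnormZ hℓ)) hs hscale
    _ ≤ (4 * (d : ℝ)) ^ s * (N : ℝ) ^ (-(2 * s)) * (sqnormZ d ℓ ^ s)⁻¹ := by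
        rw [hconst]
        gcongr
        · positivity [sqnormZ_nonneg ℓ]
        · linarith

/-- Tail sum bound: for `s > d/2` and `k ∈ [[N]]^d`, the lattice sum
`∑_{ℓ ≠ 0} (1 + |k + ℓN|^{2s})⁻¹` is finite and bounded by `c_{d,s} N^{-2s}` with
`c_{d,s} = (4d)^s ∑_{ℓ ≠ 0} |ℓ|^{-2s}` (note `|k+ℓN|^{2s} = (|k+ℓN|²)^s`). -/
theorem aliasing_tail_sum_bound (d N : ℕ) (hd : 0 < d) (hN : 1 < N)
    (s : ℝ) (hs : s > (d : ℝ) / 2) (k : Fin d → ℤ) (hk : k ∈ symmPi d N) :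
    (Summable fun ℓ : {ℓ : Fin d → ℤ // ℓ ≠ 0} => (sqnormZ d ℓ.1 ^ s)⁻¹) ∧
    (∑' ℓ : {ℓ : Fin d → ℤ // ℓ ≠ 0},
        (1 + sqnormZ d (k + fun i => ℓ.1 i * (N : ℤ)) ^ s)⁻¹)
      ≤ ((4 * (d : ℝ)) ^ s *
          ∑' ℓ : {ℓ : Fin d → ℤ // ℓ ≠ 0}, (sqnormZ d ℓ.1 ^ s)⁻¹) *
        (N : ℝ) ^ (-(2 * s)) := by
  have hs₀ : 0 ≤ s := le_trans (by positivity) hs.le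
  have hmain := summable_inv_sqnormZ_rpow hd hs
  have hterm (ℓ : {ℓ : Fin d → ℤ // ℓ ≠ 0}) :=
    inv_one_add_sqnormZ_shift_rpow_le hd (by omega) hs₀ hk ℓ.2
  have hnonneg (ℓ : {ℓ : Fin d → ℤ // ℓ ≠ 0}) :
      0 ≤ (1 + sqnormZ d (k + fun i => ℓ.1 i * (N : ℤ)) ^ s)⁻¹ := by
    positivity [sqnormZ_nonneg (k + fun i => ℓ.1 i * (N : ℤ))]
  have hdominant := hmain.mul_left ((4 * (d : ℝ)) ^ s * (N : ℝ) ^ (-(2 * s)))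
  refine ⟨hmain, ?_⟩
  calc _ ≤ ∑' ℓ : {ℓ : Fin d → ℤ // ℓ ≠ 0},
          (4 * (d : ℝ)) ^ s * (N : ℝ) ^ (-(2 * s)) * (sqnormZ d ℓ.1 ^ s)⁻¹ :=
        (hdominant.of_nonneg_of_le hnonneg hterm).tsum_le_tsum hterm hdominant
    _ = _ := by rw [tsum_mul_left]; ring

end
end

section
/- (Sup-norm stability of an FNO layer.) Let σ be B-Lipschitz, W a matrix with ‖W‖₂ ≤ M, b a vector with |b| ≤ M, and K the kernel operator (Kv)(x) = ∑_{k ∈ [[K]]^d} P^{(k)} v̂(k) e^{2πi⟨k,x⟩} with (∑_k ‖P^{(k)}‖_F²)^{1/2} ≤ M. Then the output v' = σ(Wv + Kv + b) satisfies ‖v'‖_∞ ≤ σ* + BM(1 + ‖v‖_∞ + K^{d/2}‖v‖_{L²(T^d)}), where σ* = max{|σ(0)|, 1} and v̂(k) are the Fourier coefficients of v. -/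
/-! On the unit cube, a probability space, every Fourier coefficient is bounded by the `L²` norm:
`|v̂(k)| ≤ ∫ |v| ≤ ‖v‖_{L²}`, the second step being the nonnegativity of the variance of `|v|`.
Bounding the kernel term mode by mode through the Frobenius norm of `P^{(k)}`, Cauchy–Schwarz
over the `K^d` retained modes produces the factor `K^{d/2}`. The triangle inequality in `ℓ²`
adds the contributions of `W v(x)` and `b`, and the `B`-Lipschitz activation, applied
componentwise, satisfies `‖σ(z)‖ ≤ ‖σ(0)‖ + B ‖z‖`. -/

open scoped BigOperators
open MeasureTheory Finset Filter

noncomputable section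

open scoped Matrix

section SqrtSumSq

variable {ι : Type*} [Fintype ι]

theorem sqrt_sum_sq_eq_norm (a : ι → ℝ) :
    √(∑ i, a i ^ 2) = ‖(WithLp.toLp 2 a : EuclideanSpace ℝ ι)‖ := by
  simp [EuclideanSpace.norm_eq]

theorem abs_le_sqrt_sum_sq (a : ι → ℝ) (i : ι) : |a i| ≤ √(∑ i, a i ^ 2) :=
  Real.abs_le_sqrt (single_le_sum (fun j _ => sq_nonneg (a j)) (mem_univ i))

theorem sqrt_sum_sq_le_of_abs_le {a c : ι → ℝ} (h : ∀ i, |a i| ≤ c i) :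
    √(∑ i, a i ^ 2) ≤ √(∑ i, c i ^ 2) := by
  gcongr √(∑ i, ?_) with i
  exact sq_le_sq' (abs_le.mp (h i)).1 (abs_le.mp (h i)).2

theorem sqrt_sum_sq_add_le (a b : ι → ℝ) :
    √(∑ i, (a i + b i) ^ 2) ≤ √(∑ i, a i ^ 2) + √(∑ i, b i ^ 2) := by
  simp only [sqrt_sum_sq_eq_norm]
  exact norm_add_le (WithLp.toLp 2 a) (WithLp.toLp 2 b)

theorem sqrt_sum_sq_sum_le {κ : Type*} (s : Finset κ) (a : κ → ι → ℝ) :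
    √(∑ i, (∑ k ∈ s, a k i) ^ 2) ≤ ∑ k ∈ s, √(∑ i, a k i ^ 2) := by
  have h := norm_sum_le s fun k => (WithLp.toLp 2 (a k) : EuclideanSpace ℝ ι)
  rw [← WithLp.toLp_sum, Finset.sum_fn] at h
  simpa only [sqrt_sum_sq_eq_norm] using h

theorem sqrt_sum_sq_const_mul (c : ℝ) (a : ι → ℝ) :
    √(∑ i, (c * a i) ^ 2) = |c| * √(∑ i, a i ^ 2) := by
  simp only [sqrt_sum_sq_eq_norm, ← Real.norm_eq_abs]
  exact norm_smul c (WithLp.toLp 2 a)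

theorem LipschitzWith.sqrt_sum_sq_comp_le {σ : ℝ → ℝ} {L : NNReal} (hσ : LipschitzWith L σ)
    (z : ι → ℝ) :
    √(∑ i, σ (z i) ^ 2) ≤ √(∑ _i : ι, σ 0 ^ 2) + L * √(∑ i, z i ^ 2) := by
  have hdiff : ∀ i, |σ (z i) - σ 0| ≤ L * |z i| := fun i => by
    simpa [Real.dist_eq] using hσ.dist_le_mul (z i) 0
  calc √(∑ i, σ (z i) ^ 2) = √(∑ i, (σ 0 + (σ (z i) - σ 0)) ^ 2) := by
        simp only [add_sub_cancel]
    _ ≤ √(∑ _i : ι, σ 0 ^ 2) + √(∑ i, (σ (z i) - σ 0) ^ 2) := sqrt_sum_sq_add_le _ _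
    _ ≤ √(∑ _i : ι, σ 0 ^ 2) + √(∑ i, (L * |z i|) ^ 2) := by
        grw [sqrt_sum_sq_le_of_abs_le hdiff]
    _ = √(∑ _i : ι, σ 0 ^ 2) + L * √(∑ i, z i ^ 2) := by
        simp only [sqrt_sum_sq_const_mul, sq_abs, NNReal.abs_eq]

end SqrtSumSq

section MatrixMulVec

variable {ι ι' R : Type*} [Fintype ι'] [SeminormedRing R]

theorem norm_mulVec_le (A : Matrix ι ι' R) (c : ι' → R) (i : ι) :
    ‖(A *ᵥ c) i‖ ≤ √(∑ j, ‖A i j‖ ^ 2) * √(∑ j, ‖c j‖ ^ 2) :=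
  calc ‖∑ j, A i j * c j‖ ≤ ∑ j, ‖A i j‖ * ‖c j‖ :=
        (norm_sum_le _ _).trans (sum_le_sum fun _ _ => norm_mul_le _ _)
    _ ≤ _ := Real.sum_mul_le_sqrt_mul_sqrt _ _ _

theorem sqrt_sum_sq_norm_mulVec_le [Fintype ι] (A : Matrix ι ι' R) (c : ι' → R) :
    √(∑ i, ‖(A *ᵥ c) i‖ ^ 2) ≤ √(∑ i, ∑ j, ‖A i j‖ ^ 2) * √(∑ j, ‖c j‖ ^ 2) :=
  calc √(∑ i, ‖(A *ᵥ c) i‖ ^ 2)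
      ≤ √(∑ i, (√(∑ j, ‖A i j‖ ^ 2) * √(∑ j, ‖c j‖ ^ 2)) ^ 2) :=
        sqrt_sum_sq_le_of_abs_le fun i => (abs_norm _).trans_le (norm_mulVec_le A c i)
    _ = √(∑ i, ∑ j, ‖A i j‖ ^ 2) * √(∑ j, ‖c j‖ ^ 2) := by
        simp only [mul_pow, Real.sq_sqrt (sum_nonneg fun _ _ => sq_nonneg _), ← sum_mul]
        rw [Real.sqrt_mul (by positivity)]

theorem sqrt_sum_sq_re_sum_mulVec_le {κ : Type*} [Fintype ι] (s : Finset κ)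
    (A : κ → Matrix ι ι' ℂ) (c : κ → ι' → ℂ) (e : κ → ℂ) (he : ∀ k, ‖e k‖ ≤ 1) {S : ℝ}
    (hc : ∀ k ∈ s, √(∑ j, ‖c k j‖ ^ 2) ≤ S) :
    √(∑ i, ((∑ k ∈ s, (A k *ᵥ c k) i * e k).re) ^ 2)
      ≤ √(#s : ℝ) * √(∑ k ∈ s, ∑ i, ∑ j, ‖A k i j‖ ^ 2) * S := by
  rcases s.eq_empty_or_nonempty with rfl | ⟨k₀, hk₀⟩
  · simp
  have hS : 0 ≤ S := (Real.sqrt_nonneg _).trans (hc k₀ hk₀)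
  set F : κ → ℝ := fun k => √(∑ i, ∑ j, ‖A k i j‖ ^ 2)
  have hre : ∀ i, |(∑ k ∈ s, (A k *ᵥ c k) i * e k).re| ≤ ∑ k ∈ s, ‖(A k *ᵥ c k) i‖ := fun i =>
    calc |(∑ k ∈ s, (A k *ᵥ c k) i * e k).re| ≤ ∑ k ∈ s, ‖(A k *ᵥ c k) i * e k‖ :=
          (Complex.abs_re_le_norm _).trans (norm_sum_le _ _)
      _ ≤ ∑ k ∈ s, ‖(A k *ᵥ c k) i‖ := by
          gcongr with k
          exact (norm_mul_le _ _).trans (mul_le_of_le_one_right (norm_nonneg _) (he k))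
  have hF : ∑ k ∈ s, F k ≤ √(#s : ℝ) * √(∑ k ∈ s, ∑ i, ∑ j, ‖A k i j‖ ^ 2) := by
    simpa [F, Real.sq_sqrt (sum_nonneg fun _ _ => sum_nonneg fun _ _ => sq_nonneg _)] using
      Real.sum_mul_le_sqrt_mul_sqrt s (fun _ => 1) F
  calc √(∑ i, ((∑ k ∈ s, (A k *ᵥ c k) i * e k).re) ^ 2)
      ≤ √(∑ i, (∑ k ∈ s, ‖(A k *ᵥ c k) i‖) ^ 2) := sqrt_sum_sq_le_of_abs_le hre
    _ ≤ ∑ k ∈ s, √(∑ i, ‖(A k *ᵥ c k) i‖ ^ 2) := sqrt_sum_sq_sum_le s _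
    _ ≤ ∑ k ∈ s, F k * S :=
        sum_le_sum fun k hk => (sqrt_sum_sq_norm_mulVec_le _ _).trans (by gcongr; exact hc k hk)
    _ = (∑ k ∈ s, F k) * S := (sum_mul _ _ _).symm
    _ ≤ √(#s : ℝ) * √(∑ k ∈ s, ∑ i, ∑ j, ‖A k i j‖ ^ 2) * S := by gcongr

end MatrixMulVec

theorem ProbabilityTheory.sq_integral_abs_le_integral_sq {α : Type*} [MeasurableSpace α]
    {μ : Measure α} [IsProbabilityMeasure μ] {g : α → ℝ} (hg : MemLp g 2 μ) :
    (∫ x, |g x| ∂μ) ^ 2 ≤ ∫ x, g x ^ 2 ∂μ := by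
  have h := variance_nonneg |g| μ
  rw [variance_eq_sub hg.abs] at h
  simpa [sq_abs] using h

theorem norm_fexp (d : ℕ) (k : Fin d → ℤ) (x : Fin d → ℝ) : ‖fexp d k x‖ = 1 := by
  rw [fexp, Complex.norm_exp]
  simp

theorem volume_cube (d : ℕ) : volume (cube d) = 1 := by
  rw [cube, volume_pi_pi]
  simp

instance (d : ℕ) : IsProbabilityMeasure (volume.restrict (cube d)) :=
  ⟨by rw [Measure.restrict_apply_univ, volume_cube]⟩

theorem norm_fcoef_le_integral_abs {d : ℕ} (g : (Fin d → ℝ) → ℝ) (k : Fin d → ℤ) :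
    ‖fcoef d (fun y => (g y : ℂ)) k‖ ≤ ∫ x in cube d, |g x| :=
  (norm_integral_le_integral_norm _).trans_eq <| by simp [norm_fexp]

theorem sq_norm_fcoef_le {d : ℕ} {g : (Fin d → ℝ) → ℝ}
    (hg : MemLp g 2 (volume.restrict (cube d))) (k : Fin d → ℤ) :
    ‖fcoef d (fun y => (g y : ℂ)) k‖ ^ 2 ≤ ∫ x in cube d, g x ^ 2 := by
  grw [norm_fcoef_le_integral_abs]
  exact ProbabilityTheory.sq_integral_abs_le_integral_sq hg

theorem sqrt_sum_sq_norm_fcoef_le {d : ℕ} {ι : Type*} [Fintype ι] {v : (Fin d → ℝ) → ι → ℝ}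
    (hv : ∀ i, MemLp (fun x => v x i) 2 (volume.restrict (cube d))) (k : Fin d → ℤ) :
    √(∑ i, ‖fcoef d (fun y => (v y i : ℂ)) k‖ ^ 2) ≤ √(∫ x in cube d, ∑ i, v x i ^ 2) := by
  rw [integral_finsetSum _ fun i _ => (hv i).integrable_sq]
  gcongr with i
  exact sq_norm_fcoef_le (hv i) k

theorem card_symmSet {N : ℕ} (hN : 1 ≤ N) : #(symmSet N) = N := by
  rw [symmSet, Int.card_Icc]
  omega

theorem sqrt_card_symmPi (d : ℕ) {N : ℕ} (hN : 1 ≤ N) :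
    √(#(symmPi d N) : ℝ) = (N : ℝ) ^ ((d : ℝ) / 2) := by
  rw [symmPi, Fintype.card_piFinset, prod_const, card_symmSet hN, card_univ, Fintype.card_fin,
    Nat.cast_pow, Real.sqrt_eq_rpow, ← Real.rpow_natCast, ← Real.rpow_mul (Nat.cast_nonneg N)]
  ring_nf

theorem fno_layer_sup_bound_general (d K p m : ℕ) (hK : 1 ≤ K)
    (B M : ℝ) (hB : 1 ≤ B) (hM : 1 ≤ M)
    (σ : ℝ → ℝ) (hσ : LipschitzWith (Real.toNNReal B) σ)
    (W : Matrix (Fin m) (Fin p) ℝ) (b : Fin m → ℝ)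
    (P : (Fin d → ℤ) → Matrix (Fin m) (Fin p) ℂ)
    (hW : ∀ y : Fin p → ℝ,
      Real.sqrt (∑ j, (W.mulVec y j) ^ 2) ≤ M * Real.sqrt (∑ j', (y j') ^ 2))
    (hb : Real.sqrt (∑ j, (b j) ^ 2) ≤ M)
    (hP : Real.sqrt (∑ k ∈ symmPi d K, ∑ j, ∑ j', ‖P k j j'‖ ^ 2) ≤ M)
    (v : (Fin d → ℝ) → Fin p → ℝ) (Vinf : ℝ)
    (hmeas : ∀ j', AEStronglyMeasurable (fun x => v x j') (volume.restrict (cube d)))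
    (hV : ∀ x, Real.sqrt (∑ j', (v x j') ^ 2) ≤ Vinf) :
    ∀ x, Real.sqrt (∑ j, (σ (W.mulVec (v x) j
          + (∑ k ∈ symmPi d K, (∑ j', P k j j' *
              fcoef d (fun y => ((v y j' : ℝ) : ℂ)) k) * fexp d k x).re
          + b j)) ^ 2)
      ≤ max (Real.sqrt (∑ _j : Fin m, (σ 0) ^ 2)) 1
        + B * M * (1 + Vinf + (K : ℝ) ^ ((d : ℝ) / 2)
            * Real.sqrt (∫ x in cube d, ∑ j', (v x j') ^ 2)) := by
  intro x
  have hB0 : 0 ≤ B := zero_le_one.trans hB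
  have hM0 : 0 ≤ M := zero_le_one.trans hM
  have hv : ∀ j', MemLp (fun y => v y j') 2 (volume.restrict (cube d)) := fun j' =>
    MemLp.of_bound (hmeas j') Vinf <|
      ae_of_all _ fun y => (abs_le_sqrt_sum_sq (v y) j').trans (hV y)
  have hlin : √(∑ j, (W.mulVec (v x) j) ^ 2) ≤ M * Vinf :=
    (hW (v x)).trans (by gcongr; exact hV x)
  have hker := sqrt_sum_sq_re_sum_mulVec_le (symmPi d K) P _ (fun k => fexp d k x)
    (fun k => (norm_fexp d k x).le) fun k _ => sqrt_sum_sq_norm_fcoef_le hv k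
  simp only [sqrt_card_symmPi d hK, Matrix.mulVec, dotProduct] at hker
  refine (hσ.sqrt_sum_sq_comp_le _).trans ?_
  rw [Real.coe_toNNReal B hB0]
  grw [sqrt_sum_sq_add_le, sqrt_sum_sq_add_le, hlin, hker, hb, hP,
    le_max_left (√(∑ _j : Fin m, σ 0 ^ 2)) 1]
  linarith

/-- Sup-norm stability of an FNO layer: with `σ` a `B`-Lipschitz (componentwise) activation,
`‖W‖₂ ≤ M`, `|b| ≤ M`, Fourier kernel weights with total Frobenius norm `≤ M`, the layer
output `v' = σ(Wv + Kv + b)` satisfies, pointwise,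
`|v'(x)| ≤ σ* + B M (1 + ‖v‖_∞ + K^{d/2} ‖v‖_{L²(T^d)})` with `σ* = max{|σ(0)|, 1}`. -/
theorem fno_layer_sup_bound (d K p m : ℕ) (hd : 0 < d) (hK : 1 ≤ K)
    (B M : ℝ) (hB : 1 ≤ B) (hM : 1 ≤ M)
    (σ : ℝ → ℝ) (hσ : LipschitzWith (Real.toNNReal B) σ)
    (W : Matrix (Fin m) (Fin p) ℝ) (b : Fin m → ℝ)
    (P : (Fin d → ℤ) → Matrix (Fin m) (Fin p) ℂ)
    (hW : ∀ y : Fin p → ℝ,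
      Real.sqrt (∑ j, (W.mulVec y j) ^ 2) ≤ M * Real.sqrt (∑ j', (y j') ^ 2))
    (hb : Real.sqrt (∑ j, (b j) ^ 2) ≤ M)
    (hP : Real.sqrt (∑ k ∈ symmPi d K, ∑ j, ∑ j', ‖P k j j'‖ ^ 2) ≤ M)
    (v : (Fin d → ℝ) → Fin p → ℝ) (Vinf : ℝ)
    (hmeas : ∀ j', AEStronglyMeasurable (fun x => v x j') (volume.restrict (cube d)))
    (hV : ∀ x, Real.sqrt (∑ j', (v x j') ^ 2) ≤ Vinf) :
    ∀ x, Real.sqrt (∑ j, (σ (W.mulVec (v x) j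
          + (∑ k ∈ symmPi d K, (∑ j', P k j j' *
              fcoef d (fun y => ((v y j' : ℝ) : ℂ)) k) * fexp d k x).re
          + b j)) ^ 2)
      ≤ max (Real.sqrt (∑ _j : Fin m, (σ 0) ^ 2)) 1
        + B * M * (1 + Vinf + (K : ℝ) ^ ((d : ℝ) / 2)
            * Real.sqrt (∫ x in cube d, ∑ j', (v x j') ^ 2)) :=
  fno_layer_sup_bound_general d K p m hK B M hB hM σ hσ W b P hW hb hP v Vinf hmeas hV

end
end
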